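/- arXiv:2107.01494 — 3 statements merged into one kernel-verified Lean document; each statement's English description precedes it below -/
import Mathlib

section
/- Let ν₁, ν₂ be finite measures on ℝ≥0 supported in [0,M], with cumulative functions F_j(x) = ν_j([0,x]). For δ > 0 and intervals I_i = [(i−1)δ, iδ), the Kolmogorov–Smirnov distance satisfies d_KS(ν₁,ν₂) ≤ Σ_{i=1}^{⌈M/δ⌉} |ν₁(I_i) − ν₂(I_i)| + sup_{|x−y|=δ} (|F₁(x)−F₁(y)| + |F₂(x)−F₂(y)|). -/
open MeasureTheory

lemma sum_ico_aux (ν : Measure ℝ) [IsFiniteMeasure ν] (δ : ℝ) (hδ : 0 < δ) (k : ℕ) :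
    (ν (Set.Ico 0 ((k : ℝ) * δ))).toReal =
      ∑ i ∈ Finset.Icc 1 k, (ν (Set.Ico (((i : ℝ) - 1) * δ) ((i : ℝ) * δ))).toReal := by
  induction k with
  | zero => simp
  | succ k ih =>
    rw [Finset.sum_Icc_succ_top (by omega : 1 ≤ k + 1), ← ih]
    have h1 : (0 : ℝ) ≤ (k : ℝ) * δ := by positivity
    have h2 : (k : ℝ) * δ ≤ ((k : ℝ) + 1) * δ := by nlinarith
    have hu : Set.Ico (0:ℝ) ((k:ℝ)*δ) ∪ Set.Ico ((k:ℝ)*δ) (((k:ℝ)+1)*δ) =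
        Set.Ico (0:ℝ) (((k:ℝ)+1)*δ) := Set.Ico_union_Ico_eq_Ico h1 h2
    have hcast : ((k+1 : ℕ) : ℝ) = (k : ℝ) + 1 := by push_cast; ring
    rw [hcast, ← hu, measure_union (Set.Ico_disjoint_Ico_same) measurableSet_Ico,
      ENNReal.toReal_add (measure_ne_top _ _) (measure_ne_top _ _)]
    congr 2
    ring_nf

theorem stmt_6 (ν₁ ν₂ : Measure ℝ) [IsFiniteMeasure ν₁] [IsFiniteMeasure ν₂]
    (M δ : ℝ) (hM : 0 ≤ M) (hδ : 0 < δ)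
    (hsupp₁ : ν₁ (Set.Iio 0) = 0 ∧ ν₁ (Set.Ioi M) = 0)
    (hsupp₂ : ν₂ (Set.Iio 0) = 0 ∧ ν₂ (Set.Ioi M) = 0) :
    (⨆ x : ℝ, |(ν₁ (Set.Icc 0 x)).toReal - (ν₂ (Set.Icc 0 x)).toReal|) ≤
      (∑ i ∈ Finset.Icc 1 ⌈M / δ⌉₊,
        |(ν₁ (Set.Ico (((i : ℝ) - 1) * δ) ((i : ℝ) * δ))).toReal -
          (ν₂ (Set.Ico (((i : ℝ) - 1) * δ) ((i : ℝ) * δ))).toReal|) +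
      ⨆ x : ℝ, (|(ν₁ (Set.Icc 0 (x + δ))).toReal - (ν₁ (Set.Icc 0 x)).toReal| +
        |(ν₂ (Set.Icc 0 (x + δ))).toReal - (ν₂ (Set.Icc 0 x)).toReal|) := by
  obtain ⟨h1a, h1b⟩ := hsupp₁
  obtain ⟨h2a, h2b⟩ := hsupp₂
  have habs : ∀ (ν : Measure ℝ) [IsFiniteMeasure ν] (a b : ℝ),
      |(ν (Set.Icc 0 a)).toReal - (ν (Set.Icc 0 b)).toReal| ≤ (ν Set.univ).toReal := by
    intro ν _ a b
    have h1 : (ν (Set.Icc 0 a)).toReal ≤ (ν Set.univ).toReal :=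
      ENNReal.toReal_mono (measure_ne_top _ _) (measure_mono (Set.subset_univ _))
    have h2 : (ν (Set.Icc 0 b)).toReal ≤ (ν Set.univ).toReal :=
      ENNReal.toReal_mono (measure_ne_top _ _) (measure_mono (Set.subset_univ _))
    have h3 : (0:ℝ) ≤ (ν (Set.Icc 0 a)).toReal := ENNReal.toReal_nonneg
    have h4 : (0:ℝ) ≤ (ν (Set.Icc 0 b)).toReal := ENNReal.toReal_nonneg
    rw [abs_le]; constructor <;> linarith
  have hbdd : BddAbove (Set.range fun x : ℝ =>
      |(ν₁ (Set.Icc 0 (x + δ))).toReal - (ν₁ (Set.Icc 0 x)).toReal| +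
        |(ν₂ (Set.Icc 0 (x + δ))).toReal - (ν₂ (Set.Icc 0 x)).toReal|) := by
    refine ⟨(ν₁ Set.univ).toReal + (ν₂ Set.univ).toReal, ?_⟩
    rintro _ ⟨x, rfl⟩
    exact add_le_add (habs ν₁ _ _) (habs ν₂ _ _)
  have hT0 : 0 ≤ ⨆ x : ℝ, (|(ν₁ (Set.Icc 0 (x + δ))).toReal - (ν₁ (Set.Icc 0 x)).toReal| +
      |(ν₂ (Set.Icc 0 (x + δ))).toReal - (ν₂ (Set.Icc 0 x)).toReal|) :=
    le_ciSup_of_le hbdd 0 (by positivity)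
  have hS0 : 0 ≤ ∑ i ∈ Finset.Icc 1 ⌈M / δ⌉₊,
      |(ν₁ (Set.Ico (((i : ℝ) - 1) * δ) ((i : ℝ) * δ))).toReal -
        (ν₂ (Set.Ico (((i : ℝ) - 1) * δ) ((i : ℝ) * δ))).toReal| :=
    Finset.sum_nonneg fun i _ => abs_nonneg _
  apply ciSup_le
  intro x
  by_cases hx : 0 ≤ x
  · set x' := min x M with hx'def
    have hx'0 : 0 ≤ x' := le_min hx hM
    have hx'M : x' ≤ M := min_le_right _ _
    have hFeq : ∀ (ν : Measure ℝ), ν (Set.Ioi M) = 0 →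
        ν (Set.Icc 0 x) = ν (Set.Icc 0 x') := by
      intro ν hν
      rcases le_or_gt x M with h | h
      · rw [hx'def, min_eq_left h]
      · rw [hx'def, min_eq_right h.le]
        apply le_antisymm
        · calc ν (Set.Icc 0 x) ≤ ν (Set.Icc 0 M ∪ Set.Ioi M) := by
                apply measure_mono
                intro t ht
                by_cases htM : t ≤ M
                · exact Or.inl ⟨ht.1, htM⟩
                · exact Or.inr (lt_of_not_ge htM)
          _ ≤ ν (Set.Icc 0 M) + ν (Set.Ioi M) := measure_union_le _ _
          _ = ν (Set.Icc 0 M) := by rw [hν, add_zero]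
        · exact measure_mono (Set.Icc_subset_Icc_right h.le)
    rw [hFeq ν₁ h1b, hFeq ν₂ h2b]
    set k := ⌊x' / δ⌋₊ with hkdef
    have hk1 : (k : ℝ) * δ ≤ x' := by
      have h := Nat.floor_le (div_nonneg hx'0 hδ.le)
      calc (k : ℝ) * δ ≤ (x' / δ) * δ := by nlinarith
        _ = x' := div_mul_cancel₀ _ hδ.ne'
    have hk2 : x' < ((k : ℝ) + 1) * δ := by
      have h := Nat.lt_floor_add_one (x' / δ)
      have h2 : x' = (x' / δ) * δ := (div_mul_cancel₀ _ hδ.ne').symm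
      nlinarith
    have hkm : k ≤ ⌈M / δ⌉₊ := by
      have hdd : x' / δ ≤ M / δ := by gcongr
      calc k ≤ ⌊M / δ⌋₊ := Nat.floor_le_floor hdd
        _ ≤ ⌈M / δ⌉₊ := Nat.floor_le_ceil _
    -- key subset facts
    have hsub1 : Set.Icc (0:ℝ) (x' - δ) ⊆ Set.Ico 0 ((k:ℝ) * δ) := by
      intro t ht
      exact ⟨ht.1, by have := ht.2; linarith⟩
    have hsub2 : Set.Ico (0:ℝ) ((k:ℝ) * δ) ⊆ Set.Icc 0 x' := by
      intro t ht
      exact ⟨ht.1, le_trans ht.2.le hk1⟩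
    have key : ∀ (ν : Measure ℝ) [IsFiniteMeasure ν],
        (ν (Set.Icc 0 (x' - δ))).toReal ≤ (ν (Set.Ico 0 ((k:ℝ) * δ))).toReal ∧
        (ν (Set.Ico 0 ((k:ℝ) * δ))).toReal ≤ (ν (Set.Icc 0 x')).toReal := by
      intro ν _
      exact ⟨ENNReal.toReal_mono (measure_ne_top _ _) (measure_mono hsub1),
        ENNReal.toReal_mono (measure_ne_top _ _) (measure_mono hsub2)⟩
    obtain ⟨h1s, h1t⟩ := key ν₁
    obtain ⟨h2s, h2t⟩ := key ν₂
    -- sum bound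
    have hsum : |(ν₁ (Set.Ico 0 ((k:ℝ) * δ))).toReal - (ν₂ (Set.Ico 0 ((k:ℝ) * δ))).toReal| ≤
        ∑ i ∈ Finset.Icc 1 ⌈M / δ⌉₊,
          |(ν₁ (Set.Ico (((i : ℝ) - 1) * δ) ((i : ℝ) * δ))).toReal -
            (ν₂ (Set.Ico (((i : ℝ) - 1) * δ) ((i : ℝ) * δ))).toReal| := by
      rw [sum_ico_aux ν₁ δ hδ k, sum_ico_aux ν₂ δ hδ k, ← Finset.sum_sub_distrib]
      calc |∑ i ∈ Finset.Icc 1 k,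
            ((ν₁ (Set.Ico (((i : ℝ) - 1) * δ) ((i : ℝ) * δ))).toReal -
              (ν₂ (Set.Ico (((i : ℝ) - 1) * δ) ((i : ℝ) * δ))).toReal)|
          ≤ ∑ i ∈ Finset.Icc 1 k,
            |(ν₁ (Set.Ico (((i : ℝ) - 1) * δ) ((i : ℝ) * δ))).toReal -
              (ν₂ (Set.Ico (((i : ℝ) - 1) * δ) ((i : ℝ) * δ))).toReal| :=
            Finset.abs_sum_le_sum_abs _ _
        _ ≤ _ := Finset.sum_le_sum_of_subset_of_nonneg
            (Finset.Icc_subset_Icc_right hkm) (fun i _ _ => abs_nonneg _)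
    -- sup bound
    have hy := le_ciSup hbdd (x' - δ)
    simp only [sub_add_cancel] at hy
    have hle1 : (ν₁ (Set.Icc 0 x')).toReal - (ν₁ (Set.Ico 0 ((k:ℝ) * δ))).toReal +
        ((ν₂ (Set.Icc 0 x')).toReal - (ν₂ (Set.Ico 0 ((k:ℝ) * δ))).toReal) ≤
        ⨆ y : ℝ, (|(ν₁ (Set.Icc 0 (y + δ))).toReal - (ν₁ (Set.Icc 0 y)).toReal| +
          |(ν₂ (Set.Icc 0 (y + δ))).toReal - (ν₂ (Set.Icc 0 y)).toReal|) := by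
      refine le_trans ?_ hy
      have a1 := le_abs_self ((ν₁ (Set.Icc 0 x')).toReal - (ν₁ (Set.Icc 0 (x' - δ))).toReal)
      have a2 := le_abs_self ((ν₂ (Set.Icc 0 x')).toReal - (ν₂ (Set.Icc 0 (x' - δ))).toReal)
      linarith
    have hb1 := le_abs_self ((ν₁ (Set.Ico 0 ((k:ℝ) * δ))).toReal - (ν₂ (Set.Ico 0 ((k:ℝ) * δ))).toReal)
    have hb2 := neg_abs_le ((ν₁ (Set.Ico 0 ((k:ℝ) * δ))).toReal - (ν₂ (Set.Ico 0 ((k:ℝ) * δ))).toReal)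
    rw [abs_le]
    constructor <;> linarith
  · have hempty : Set.Icc (0:ℝ) x = ∅ := Set.Icc_eq_empty (fun h => hx (le_trans h (le_refl x)))
    rw [hempty]
    simp only [measure_empty, ENNReal.toReal_zero, sub_zero, sub_self, abs_zero]
    exact add_nonneg hS0 hT0
end

section
/- Let a : [0,∞) → ℝ≥0 satisfy the renewal equation a(t) = g(t) + ∫₀ᵗ a(t−s) p(s) ds, where g is a continuous, nonnegative, locally bounded function and p is a probability density on ℝ≥0 that is continuous and locally bounded. Then the unique locally bounded solution is a(t) = Σ_{j=0}^∞ p^{*(j)}(t) * g(t), where p^{*(j)} denotes j-fold self-convolution (p^{*(0)} * g = g). -/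
open MeasureTheory intervalIntegral

/-- The terms `p^{*(j)} * g` of the renewal series: term 0 is `g`, and
term `j+1` is `p ⋆ (term j)` where `⋆` is convolution on the half-line. -/
noncomputable def renewalTerm (p g : ℝ → ℝ) : ℕ → ℝ → ℝ
  | 0 => g
  | (j + 1) => fun t => ∫ s in (0:ℝ)..t, p (t - s) * renewalTerm p g j s

lemma renewalTerm_continuous {p g : ℝ → ℝ} (hp : Continuous p) (hg : Continuous g) :
    ∀ j, Continuous (renewalTerm p g j)
  | 0 => hg
  | (j + 1) => by
    have ih := renewalTerm_continuous hp hg j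
    have hunc : Continuous (Function.uncurry fun t s => p (t - s) * renewalTerm p g j s) := by
      apply Continuous.mul
      · exact hp.comp (continuous_fst.sub continuous_snd)
      · exact ih.comp continuous_snd
    exact intervalIntegral.continuous_parametric_intervalIntegral_of_continuous hunc continuous_id

lemma renewalTerm_nonneg {p g : ℝ → ℝ} (hp : ∀ t, 0 ≤ p t) (hg : ∀ t, 0 ≤ g t) :
    ∀ j, ∀ t : ℝ, 0 ≤ t → 0 ≤ renewalTerm p g j t
  | 0, t, _ => hg t
  | (j + 1), t, ht => by
    refine intervalIntegral.integral_nonneg ht ?_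
    intro s hs
    exact mul_nonneg (hp _) (renewalTerm_nonneg hp hg j s hs.1)

/-- change of variable `s ↦ t - s` for interval integrals from `0` to `t`. -/
lemma integral_reflect (F : ℝ → ℝ) (t : ℝ) :
    (∫ s in (0:ℝ)..t, F (t - s)) = ∫ s in (0:ℝ)..t, F s := by
  simpa using intervalIntegral.integral_comp_sub_left (a := (0:ℝ)) (b := t) F t

theorem stmt_10 (p g a : ℝ → ℝ)
    (hgc : Continuous g) (hgnn : ∀ t, 0 ≤ g t)
    (hgloc : ∀ T : ℝ, ∃ C : ℝ, ∀ t ∈ Set.Icc (0:ℝ) T, |g t| ≤ C)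
    (hpc : Continuous p) (hpnn : ∀ t, 0 ≤ p t) (hpzero : ∀ t < (0:ℝ), p t = 0)
    (hploc : ∀ T : ℝ, ∃ C : ℝ, ∀ t ∈ Set.Icc (0:ℝ) T, |p t| ≤ C)
    (hpdens : (∫ t in Set.Ioi (0:ℝ), p t) = 1)
    (hac : Continuous a) (hann : ∀ t, 0 ≤ a t)
    (haloc : ∀ T : ℝ, ∃ C : ℝ, ∀ t ∈ Set.Icc (0:ℝ) T, a t ≤ C)
    (heq : ∀ t : ℝ, 0 ≤ t → a t = g t + ∫ s in (0:ℝ)..t, a (t - s) * p s) :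
    ∀ t : ℝ, 0 ≤ t → a t = ∑' j : ℕ, renewalTerm p g j t := by
  have hRc : ∀ n, Continuous (renewalTerm p a n) := renewalTerm_continuous hpc hac
  have hGc : ∀ n, Continuous (renewalTerm p g n) := renewalTerm_continuous hpc hgc
  -- key identity: R n = term n + R (n+1) on [0,∞)
  have key1 : ∀ n : ℕ, ∀ u : ℝ, 0 ≤ u →
      renewalTerm p a n u = renewalTerm p g n u + renewalTerm p a (n + 1) u := by
    intro n
    induction n with
    | zero =>
      intro u hu
      show a u = g u + ∫ s in (0:ℝ)..u, p (u - s) * a s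
      rw [heq u hu]
      congr 1
      have h := integral_reflect (fun s => a s * p (u - s)) u
      simp only [sub_sub_cancel] at h
      rw [h]
      simp [mul_comm]
    | succ n ih =>
      intro u hu
      have hcongr : renewalTerm p a (n + 1) u
          = ∫ s in (0:ℝ)..u, p (u - s) *
              (renewalTerm p g n s + renewalTerm p a (n + 1) s) := by
        show (∫ s in (0:ℝ)..u, p (u - s) * renewalTerm p a n s) = _
        refine intervalIntegral.integral_congr fun s hs => ?_
        rw [Set.uIcc_of_le hu] at hs
        rw [ih s hs.1]
      have h1 : IntervalIntegrable (fun s => p (u - s) * renewalTerm p g n s) volume 0 u :=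
        (((hpc.comp (continuous_const.sub continuous_id)).mul (hGc n))).intervalIntegrable 0 u
      have h2 : IntervalIntegrable (fun s => p (u - s) * renewalTerm p a (n + 1) s) volume 0 u :=
        (((hpc.comp (continuous_const.sub continuous_id)).mul (hRc (n + 1)))).intervalIntegrable 0 u
      calc renewalTerm p a (n + 1) u
          = ∫ s in (0:ℝ)..u, (p (u - s) * renewalTerm p g n s
              + p (u - s) * renewalTerm p a (n + 1) s) := by
            rw [hcongr]; congr 1; funext s; ring
        _ = (∫ s in (0:ℝ)..u, p (u - s) * renewalTerm p g n s)
              + ∫ s in (0:ℝ)..u, p (u - s) * renewalTerm p a (n + 1) s :=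
            intervalIntegral.integral_add h1 h2
        _ = renewalTerm p g (n + 1) u + renewalTerm p a (n + 2) u := rfl
  intro t ht
  -- partial sums with remainder
  have key2 : ∀ n : ℕ,
      a t = (∑ j ∈ Finset.range n, renewalTerm p g j t) + renewalTerm p a n t := by
    intro n
    induction n with
    | zero => simp [renewalTerm]
    | succ n ih =>
      rw [Finset.sum_range_succ]
      have h := key1 n t ht
      linarith [ih, h]
  -- integrability of p on Ioi 0
  have hint : IntegrableOn p (Set.Ioi (0:ℝ)) := by
    apply Integrable.of_integral_ne_zero
    rw [hpdens]; norm_num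
  -- the contraction constant
  set c : ℝ := ∫ u in Set.Ioi (0:ℝ), p u * Real.exp (-u) with hc_def
  have hintc : IntegrableOn (fun u => p u * Real.exp (-u)) (Set.Ioi (0:ℝ)) := by
    refine MeasureTheory.Integrable.mono hint ((hpc.mul (Real.continuous_exp.comp continuous_neg)).aestronglyMeasurable) ?_
    filter_upwards [ae_restrict_mem measurableSet_Ioi] with u hu
    have hu0 : (0:ℝ) < u := hu
    have he : Real.exp (-u) ≤ 1 := Real.exp_le_one_iff.2 (by linarith)
    rw [Real.norm_eq_abs, Real.norm_eq_abs, abs_of_nonneg (hpnn u),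
      abs_of_nonneg (mul_nonneg (hpnn u) (Real.exp_nonneg _))]
    exact mul_le_of_le_one_right (hpnn u) he
  have hc0 : 0 ≤ c :=
    setIntegral_nonneg measurableSet_Ioi fun u _ => mul_nonneg (hpnn u) (Real.exp_nonneg _)
  have hc1 : c < 1 := by
    rw [← hpdens]
    have hpos : ∃ u₀ : ℝ, 0 < u₀ ∧ 0 < p u₀ := by
      by_contra h
      push_neg at h
      have hz : (∫ u in Set.Ioi (0:ℝ), p u) = 0 := by
        rw [setIntegral_congr_fun measurableSet_Ioi
          (fun u hu => le_antisymm (h u hu) (hpnn u) : Set.EqOn p 0 (Set.Ioi 0))]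
        simp
      rw [hpdens] at hz; norm_num at hz
    obtain ⟨u₀, hu₀, hpu₀⟩ := hpos
    have hdiff : 0 < ∫ u in Set.Ioi (0:ℝ), (p u - p u * Real.exp (-u)) := by
      refine (setIntegral_pos_iff_support_of_nonneg_ae ?_ ?_).2 ?_
      · filter_upwards [ae_restrict_mem measurableSet_Ioi] with u hu
        have hu0 : (0:ℝ) < u := hu
        have he : Real.exp (-u) ≤ 1 := Real.exp_le_one_iff.2 (by linarith)
        show (0:ℝ) ≤ p u - p u * Real.exp (-u)
        nlinarith [hpnn u]
      · exact MeasureTheory.Integrable.sub hint hintc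
      · have hUopen : IsOpen {u : ℝ | 0 < u ∧ 0 < p u} :=
          (isOpen_Ioi.inter (isOpen_Ioi.preimage hpc))
        have hsub : {u : ℝ | 0 < u ∧ 0 < p u} ⊆
            (Function.support fun u => p u - p u * Real.exp (-u)) ∩ Set.Ioi 0 := by
          rintro u ⟨hu1, hu2⟩
          constructor
          · have hlt : Real.exp (-u) < 1 := Real.exp_lt_one_iff.2 (by linarith)
            have : 0 < p u - p u * Real.exp (-u) := by nlinarith
            exact ne_of_gt this
          · exact hu1
        have hUpos : 0 < volume {u : ℝ | 0 < u ∧ 0 < p u} :=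
          hUopen.measure_pos volume ⟨u₀, hu₀, hpu₀⟩
        exact hUpos.trans_le (measure_mono hsub)
    rw [integral_sub hint hintc] at hdiff
    linarith
  -- bound on remainder
  obtain ⟨M, hM⟩ := haloc t
  have hM0 : 0 ≤ M := le_trans (hann 0) (hM 0 ⟨le_refl 0, ht⟩)
  have hbound : ∀ n : ℕ, ∀ u ∈ Set.Icc (0:ℝ) t,
      renewalTerm p a n u ≤ M * Real.exp u * c ^ n := by
    intro n
    induction n with
    | zero =>
      intro u hu
      show a u ≤ M * Real.exp u * c ^ 0
      rw [pow_zero, mul_one]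
      calc a u ≤ M := hM u hu
        _ ≤ M * Real.exp u := le_mul_of_one_le_right hM0 (Real.one_le_exp hu.1)
    | succ n ih =>
      intro u hu
      have hu0 : (0:ℝ) ≤ u := hu.1
      have hintL : IntervalIntegrable (fun s => p (u - s) * renewalTerm p a n s) volume 0 u :=
        ((hpc.comp (continuous_const.sub continuous_id)).mul (hRc n)).intervalIntegrable 0 u
      have hintR : IntervalIntegrable
          (fun s => p (u - s) * (M * Real.exp s * c ^ n)) volume 0 u :=
        ((hpc.comp (continuous_const.sub continuous_id)).mul
          ((continuous_const.mul Real.continuous_exp).mul continuous_const)).intervalIntegrable 0 u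
      have step1 : renewalTerm p a (n + 1) u
          ≤ ∫ s in (0:ℝ)..u, p (u - s) * (M * Real.exp s * c ^ n) := by
        refine intervalIntegral.integral_mono_on hu0 hintL hintR fun s hs => ?_
        exact mul_le_mul_of_nonneg_left (ih s ⟨hs.1, hs.2.trans hu.2⟩) (hpnn _)
      have step2 : (∫ s in (0:ℝ)..u, p (u - s) * (M * Real.exp s * c ^ n))
          = M * c ^ n * ∫ s in (0:ℝ)..u, p (u - s) * Real.exp s := by
        rw [← intervalIntegral.integral_const_mul]
        congr 1; funext s; ring
      have step3 : (∫ s in (0:ℝ)..u, p (u - s) * Real.exp s)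
          = Real.exp u * ∫ s in (0:ℝ)..u, p s * Real.exp (-s) := by
        have h := integral_reflect (fun s => p s * Real.exp (u - s)) u
        simp only [sub_sub_cancel] at h
        rw [h, ← intervalIntegral.integral_const_mul]
        congr 1; funext s
        rw [Real.exp_sub]
        have : Real.exp (-s) = (Real.exp s)⁻¹ := Real.exp_neg s
        rw [this]
        field_simp
      have step4 : (∫ s in (0:ℝ)..u, p s * Real.exp (-s)) ≤ c := by
        rw [intervalIntegral.integral_of_le hu0]
        refine setIntegral_mono_set hintc ?_ ?_
        · filter_upwards [ae_restrict_mem measurableSet_Ioi] with s hs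
          exact mul_nonneg (hpnn s) (Real.exp_nonneg _)
        · exact HasSubset.Subset.eventuallyLE Set.Ioc_subset_Ioi_self
      calc renewalTerm p a (n + 1) u
          ≤ M * c ^ n * ∫ s in (0:ℝ)..u, p (u - s) * Real.exp s := by
            rw [← step2]; exact step1
        _ = M * c ^ n * (Real.exp u * ∫ s in (0:ℝ)..u, p s * Real.exp (-s)) := by rw [step3]
        _ ≤ M * c ^ n * (Real.exp u * c) := by
            refine mul_le_mul_of_nonneg_left ?_ (mul_nonneg hM0 (pow_nonneg hc0 n))
            exact mul_le_mul_of_nonneg_left step4 (Real.exp_nonneg _)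
        _ = M * Real.exp u * c ^ (n + 1) := by ring
  -- remainder tends to 0
  have hR0 : Filter.Tendsto (fun n => renewalTerm p a n t) Filter.atTop (nhds 0) := by
    refine squeeze_zero (fun n => renewalTerm_nonneg hpnn hann n t ht)
      (fun n => hbound n t ⟨ht, le_refl t⟩) ?_
    have h := tendsto_pow_atTop_nhds_zero_of_lt_one hc0 hc1
    have := h.const_mul (M * Real.exp t)
    simpa using this
  have hps : Filter.Tendsto (fun n => ∑ j ∈ Finset.range n, renewalTerm p g j t)
      Filter.atTop (nhds (a t)) := by
    have heqn : ∀ n, (∑ j ∈ Finset.range n, renewalTerm p g j t)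
        = a t - renewalTerm p a n t := fun n => by linarith [key2 n]
    have : Filter.Tendsto (fun n => a t - renewalTerm p a n t) Filter.atTop (nhds (a t - 0)) :=
      Filter.Tendsto.sub tendsto_const_nhds hR0
    rw [sub_zero] at this
    exact this.congr fun n => (heqn n).symm
  have hsum : HasSum (fun j => renewalTerm p g j t) (a t) :=
    (hasSum_iff_tendsto_nat_of_nonneg (fun j => renewalTerm_nonneg hpnn hgnn j t ht) _).2 hps
  exact hsum.tsum_eq.symm
end

section
/- Suppose numbers h(t_k) satisfy h(t_k) ≤ h(t_{k−1}) + C₃(δ² Σ_{i=1}^{k−1} h(t_i) + δ h(t_{k−1}) + ω δ² + δ³) with h(0)=0 for all kδ ≤ T. Then there exists a constant C (depending only on C₃ and T, not on δ or ω) such that h(t_k) ≤ C(δ² + δω) for all kδ ≤ T. -/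
theorem stmt_18 (C₃ T : ℝ) (hC₃ : 0 < C₃) (hT : 0 < T) :
    ∃ C : ℝ, 0 < C ∧ ∀ δ : ℝ, 0 < δ → ∀ ω : ℝ, 0 < ω → ∀ h : ℕ → ℝ,
      (∀ k, 0 ≤ h k) → h 0 = 0 →
      (∀ k : ℕ, ((k : ℝ) + 1) * δ ≤ T →
        h (k + 1) ≤ h k + C₃ * (δ ^ 2 * ∑ i ∈ Finset.range (k + 1), h i
          + δ * h k + ω * δ ^ 2 + δ ^ 3)) →
      ∀ k : ℕ, (k : ℝ) * δ ≤ T → h k ≤ C * (δ ^ 2 + δ * ω) := by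
  set a : ℝ := C₃ * (T + 1) with ha_def
  have ha : 0 < a := by positivity
  refine ⟨C₃ / a * Real.exp (a * T), by positivity, ?_⟩
  intro δ hδ ω hω h hpos h0 hrec
  set E : ℝ := δ ^ 2 + δ * ω with hE_def
  have hE : 0 < E := by positivity
  set g : ℕ → ℝ := fun k => E * C₃ / a * ((1 + a * δ) ^ k - 1) with hg_def
  have hbase : (1:ℝ) ≤ 1 + a * δ := by nlinarith
  have hgmono : Monotone g := by
    intro i j hij
    have := pow_le_pow_right₀ hbase hij
    have hc : 0 ≤ E * C₃ / a := by positivity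
    simp only [hg_def]
    nlinarith
  have hgnonneg : ∀ k, 0 ≤ g k := by
    intro k
    have h1 : (1:ℝ) ≤ (1 + a * δ) ^ k := one_le_pow₀ hbase
    have hc : 0 ≤ E * C₃ / a := by positivity
    simp only [hg_def]
    nlinarith
  have key : ∀ k : ℕ, (k : ℝ) * δ ≤ T → h k ≤ g k := by
    intro k
    induction k using Nat.strong_induction_on with
    | _ k ih =>
      match k with
      | 0 =>
        intro _
        simp [hg_def, h0]
      | Nat.succ j =>
        intro hkT
        have hkT' : ((j:ℝ) + 1) * δ ≤ T := by push_cast at hkT ⊢; linarith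
        have hsum : ∑ i ∈ Finset.range (j + 1), h i ≤ ((j:ℝ) + 1) * g j := by
          calc ∑ i ∈ Finset.range (j + 1), h i
              ≤ ∑ i ∈ Finset.range (j + 1), g j := by
                apply Finset.sum_le_sum
                intro i hi
                rw [Finset.mem_range] at hi
                have hiT : (i : ℝ) * δ ≤ T := by
                  have : (i : ℝ) ≤ (j : ℝ) + 1 := by exact_mod_cast Nat.le_of_lt_succ hi |>.trans (Nat.le_succ j)
                  nlinarith
                exact (ih i (Nat.lt_succ_of_lt (Nat.lt_succ_of_le (Nat.le_of_lt_succ hi)) |> fun _ => Nat.lt_succ_of_le (Nat.le_of_lt_succ hi)) hiT).trans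
                  (hgmono (Nat.le_of_lt_succ hi))
            _ = ((j:ℝ) + 1) * g j := by
                rw [Finset.sum_const, Finset.card_range]; push_cast; ring
        have hhj : h j ≤ g j := ih j (Nat.lt_succ_self j) (by nlinarith)
        have hstep := hrec j hkT'
        have hgj := hgnonneg j
        have h1 : h (j + 1) ≤ g j + C₃ * (δ ^ 2 * (((j:ℝ) + 1) * g j)
            + δ * g j + ω * δ ^ 2 + δ ^ 3) := by
          have t1 : C₃ * δ ^ 2 * (∑ i ∈ Finset.range (j + 1), h i) ≤ C₃ * δ ^ 2 * (((j:ℝ) + 1) * g j) :=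
            mul_le_mul_of_nonneg_left hsum (by positivity)
          have t2 : C₃ * δ * h j ≤ C₃ * δ * g j := mul_le_mul_of_nonneg_left hhj (by positivity)
          nlinarith [t1, t2]
        have h2 : δ ^ 2 * (((j:ℝ) + 1) * g j) ≤ δ * T * g j := by
          have t : (δ * g j) * (((j:ℝ) + 1) * δ) ≤ (δ * g j) * T :=
            mul_le_mul_of_nonneg_left hkT' (by positivity)
          nlinarith [t]
        have h3 : h (j + 1) ≤ (1 + a * δ) * g j + C₃ * δ * E := by
          simp only [hE_def, ha_def] at *
          nlinarith
        have h4 : (1 + a * δ) * g j + C₃ * δ * E = g (j + 1) := by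
          simp only [hg_def]
          field_simp
          ring
        rw [← h4]; exact h3
  intro k hkT
  rcases Nat.eq_zero_or_pos k with rfl | hk
  · rw [h0]; positivity
  have hδT : δ ≤ T := by
    have : (1:ℝ) ≤ (k:ℝ) := by exact_mod_cast hk
    nlinarith
  have hgk : g k ≤ C₃ / a * Real.exp (a * T) * E := by
    have hexp : (1 + a * δ) ^ k ≤ Real.exp (a * T) := by
      calc (1 + a * δ) ^ k ≤ (Real.exp (a * δ)) ^ k :=
            pow_le_pow_left₀ (by nlinarith) (by linarith [Real.add_one_le_exp (a * δ)]) k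
        _ = Real.exp ((a * δ) * k) := by rw [← Real.exp_nat_mul]; ring_nf
        _ ≤ Real.exp (a * T) := by
            apply Real.exp_le_exp.mpr
            nlinarith
    have hc : 0 ≤ E * C₃ / a := by positivity
    have hpos' : 0 < Real.exp (a * T) := Real.exp_pos _
    simp only [hg_def]
    have : E * C₃ / a * ((1 + a * δ) ^ k - 1) ≤ E * C₃ / a * (Real.exp (a * T)) := by
      nlinarith [one_le_pow₀ (n := k) hbase]
    calc E * C₃ / a * ((1 + a * δ) ^ k - 1) ≤ E * C₃ / a * Real.exp (a * T) := this
      _ = C₃ / a * Real.exp (a * T) * E := by ring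
  exact (key k hkT).trans hgk
end
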